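/- Let U = Φ Σ Ψᵀ be a singular value decomposition of U and let r ≤ min(N,m). Then for every matrix V ∈ ℝ^{N×r} with orthonormal columns (VᵀV = I_r), one has ‖U − V Vᵀ U‖_F² ≥ Σ_{i=r+1}^{min(N,m)} σ_i²; that is, the rank-r POD basis Φ_r of the first r columns of Φ minimizes the squared Frobenius projection error ‖U − V Vᵀ U‖_F² over all N×r matrices V with orthonormal columns. -/

import Mathlib

/-!
Write `U Uᵀ = Φ D Φᵀ` with `D = diag σᵢ²` (zero beyond `m`) and `W = Φᵀ V`. The projection
error is `tr D − tr (W Wᵀ D) = ∑ᵢ σᵢ² (1 − dᵢ)` where `dᵢ = (W Wᵀ)ᵢᵢ`. As `W Wᵀ` is an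
orthogonal projection of rank `r`, `0 ≤ dᵢ ≤ 1` and `∑ᵢ dᵢ = r`; for decreasing `σᵢ²` such a
weighted sum `∑ᵢ σᵢ² dᵢ` is at most the sum of the `r` largest terms, which leaves at least the
tail `∑_{i ≥ r} σᵢ²`.
-/

open Matrix BigOperators Finset

theorem sum_mul_le_sum_of_threshold {ι : Type*} [Fintype ι] [DecidableEq ι] (b d : ι → ℝ)
    (s : Finset ι) (τ : ℝ) (hτ : 0 ≤ τ) (hs : ∀ i ∈ s, τ ≤ b i) (hsc : ∀ i ∉ s, b i ≤ τ)
    (hd0 : ∀ i, 0 ≤ d i) (hd1 : ∀ i, d i ≤ 1) (hd : ∑ i, d i ≤ #s) :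
    ∑ i, b i * d i ≤ ∑ i ∈ s, b i := by
  have hin : ∑ i ∈ s, (b i - τ) * d i ≤ ∑ i ∈ s, (b i - τ) :=
    sum_le_sum fun i hi => mul_le_of_le_one_right (sub_nonneg.2 (hs i hi)) (hd1 i)
  have hout : ∑ i ∈ sᶜ, (b i - τ) * d i ≤ 0 :=
    sum_nonpos fun i hi => mul_nonpos_of_nonpos_of_nonneg
      (sub_nonpos.2 (hsc i (mem_compl.1 hi))) (hd0 i)
  calc ∑ i, b i * d i
      = ∑ i ∈ s, (b i - τ) * d i + ∑ i ∈ sᶜ, (b i - τ) * d i + τ * ∑ i, d i := by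
        rw [sum_add_sum_compl, mul_sum, ← sum_add_distrib]
        exact sum_congr rfl fun i _ => by ring
    _ ≤ ∑ i ∈ s, (b i - τ) + 0 + τ * #s := by
        gcongr
    _ = ∑ i ∈ s, b i := by rw [sum_sub_distrib, sum_const, nsmul_eq_mul]; ring

theorem sum_sq_eq_trace_mul_transpose {m n : Type*} [Fintype m] [Fintype n] (A : Matrix m n ℝ) :
    ∑ i, ∑ j, A i j ^ 2 = trace (A * Aᵀ) := by
  simp only [trace, diag_apply, mul_apply, transpose_apply, sq]

theorem diag_mul_transpose_nonneg {n k : Type*} [Fintype k] (W : Matrix n k ℝ) (i : n) :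
    0 ≤ (W * Wᵀ) i i :=
  sum_nonneg fun _ _ => mul_self_nonneg _

section Orthonormal

variable {n k : Type*} [Fintype n] [Fintype k] [DecidableEq k] {W : Matrix n k ℝ}

theorem diag_mul_transpose_le_one (hW : Wᵀ * W = 1) (i : n) : (W * Wᵀ) i i ≤ 1 := by
  set P := W * Wᵀ
  have hidem : P * P = P := by
    simp only [P, Matrix.mul_assoc, ← Matrix.mul_assoc Wᵀ W Wᵀ, hW, Matrix.one_mul]
  have hsymm : Pᵀ = P := by simp [P, transpose_mul]
  have hsq : P i i ^ 2 ≤ P i i := by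
    calc P i i ^ 2 ≤ ∑ j, P i j ^ 2 := single_le_sum (f := fun j => P i j ^ 2)
            (fun _ _ => sq_nonneg _) (mem_univ i)
      _ = P i i := by
        conv_rhs => rw [← hidem, mul_apply]
        refine sum_congr rfl fun j _ => ?_
        rw [sq, ← transpose_apply P j i, hsymm]
  nlinarith [diag_mul_transpose_nonneg W i]

theorem trace_mul_transpose_of_orthonormal (hW : Wᵀ * W = 1) :
    trace (W * Wᵀ) = Fintype.card k := by
  rw [trace_mul_comm, hW, trace_one]

theorem trace_mul_transpose_mul_diagonal_le [DecidableEq n] (hW : Wᵀ * W = 1) (b : n → ℝ)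
    (s : Finset n) (τ : ℝ) (hτ : 0 ≤ τ) (hs : ∀ i ∈ s, τ ≤ b i) (hsc : ∀ i ∉ s, b i ≤ τ)
    (hk : Fintype.card k ≤ #s) :
    trace (W * Wᵀ * diagonal b) ≤ ∑ i ∈ s, b i := by
  have htrace : trace (W * Wᵀ * diagonal b) = ∑ i, b i * (W * Wᵀ) i i := by
    simp only [trace, diag_apply, mul_diagonal, mul_comm]
  rw [htrace]
  exact sum_mul_le_sum_of_threshold b _ s τ hτ hs hsc (diag_mul_transpose_nonneg W)
    (diag_mul_transpose_le_one hW)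
    ((trace_mul_transpose_of_orthonormal hW).trans_le (by exact_mod_cast hk))

end Orthonormal

/-- Ky Fan's maximum principle for a diagonal matrix. -/
theorem trace_mul_transpose_mul_diagonal_le_of_antitone {N r : ℕ} {W : Matrix (Fin N) (Fin r) ℝ}
    (hW : Wᵀ * W = 1) {b : Fin N → ℝ} (hb : Antitone b) (hb0 : ∀ i, 0 ≤ b i) (hrN : r < N) :
    trace (W * Wᵀ * diagonal b) ≤ ∑ i ∈ {i : Fin N | (i : ℕ) < r}, b i :=
  trace_mul_transpose_mul_diagonal_le hW b _ (b ⟨r, hrN⟩) (hb0 _)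
    (fun _ hi => hb (Fin.le_def.2 (mem_filter.1 hi).2.le))
    (fun _ hi => hb (Fin.le_def.2 (by simpa using hi)))
    (by rw [Fintype.card_fin, Fin.card_filter_val_lt]; omega)

theorem mul_transpose_self_eq_diagonal_sq {N m : ℕ} (S : Matrix (Fin N) (Fin m) ℝ) (σ : ℕ → ℝ)
    (hS : ∀ (i : Fin N) (j : Fin m), S i j = if (i : ℕ) = (j : ℕ) then σ (i : ℕ) else 0) :
    S * Sᵀ = diagonal fun i : Fin N => if (i : ℕ) < m then σ i ^ 2 else 0 := by
  ext i k
  simp only [mul_apply, diagonal_apply, transpose_apply, hS, ite_mul, zero_mul]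
  rw [Fin.sum_univ_eq_sum_range
    (fun j => if (i : ℕ) = j then σ i * (if (k : ℕ) = j then σ k else 0) else 0) m, sum_ite_eq]
  simp only [mem_range, Fin.ext_iff]
  split_ifs <;> first | rfl | omega | exact mul_zero _ | rw [‹(k : ℕ) = i›, sq]

theorem sum_Ico_eq_sum_compl_filter_lt {N m r : ℕ} (f : ℕ → ℝ) :
    ∑ t ∈ Ico r (min N m), f t
      = ∑ i ∈ ({i : Fin N | (i : ℕ) < r} : Finset (Fin N))ᶜ, if (i : ℕ) < m then f i else 0 := by
  rw [← sum_filter]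
  refine Eq.trans ?_ (sum_map _ Fin.valEmbedding f)
  congr 1
  ext t
  simp only [mem_Ico, mem_map, mem_filter, mem_compl, mem_univ, true_and, not_lt,
    Fin.valEmbedding_apply]
  constructor
  · rintro ⟨hrt, htm⟩
    exact ⟨⟨t, by omega⟩, ⟨hrt, htm.trans_le (min_le_right N m)⟩, rfl⟩
  · rintro ⟨i, ⟨hri, him⟩, rfl⟩
    omega

theorem sum_sq_sub_mul_transpose_mul {n k p : Type*} [Fintype n] [Fintype k] [Fintype p]
    [DecidableEq k] (U : Matrix n p ℝ) {V : Matrix n k ℝ} (hV : Vᵀ * V = 1) :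
    ∑ i, ∑ j, (U - V * Vᵀ * U) i j ^ 2 = trace (U * Uᵀ) - trace (V * Vᵀ * (U * Uᵀ)) := by
  have hE : (U - V * Vᵀ * U)ᵀ * (U - V * Vᵀ * U) = Uᵀ * U - Uᵀ * (V * Vᵀ * U) := by
    have hVVV : Vᵀ * (V * (Vᵀ * U)) = Vᵀ * U := by rw [← Matrix.mul_assoc, hV, Matrix.one_mul]
    simp only [transpose_sub, transpose_mul, transpose_transpose, Matrix.sub_mul,
      Matrix.mul_sub, Matrix.mul_assoc, hVVV]
    abel
  rw [sum_sq_eq_trace_mul_transpose, trace_mul_comm, hE, trace_sub, trace_mul_comm Uᵀ,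
    trace_mul_comm Uᵀ, Matrix.mul_assoc]

theorem antitone_ite_lt_sq {N m : ℕ} {σ : ℕ → ℝ}
    (hmono : ∀ i j : ℕ, i ≤ j → j < min N m → σ j ≤ σ i)
    (hnonneg : ∀ i : ℕ, i < min N m → 0 ≤ σ i) :
    Antitone fun i : Fin N => if (i : ℕ) < m then σ i ^ 2 else 0 := by
  intro i j hij
  simp only
  split_ifs with hj hi hi
  · exact pow_le_pow_left₀ (hnonneg j (lt_min j.isLt hj)) (hmono i j hij (lt_min j.isLt hj)) 2
  · omega
  · positivity
  · rfl

theorem mul_transpose_self_of_eq_mul_mul_transpose {n p q : Type*} [Fintype n] [Fintype p]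
    [Fintype q] [DecidableEq q] {U : Matrix n q ℝ} {Φ : Matrix n p ℝ} {S : Matrix p q ℝ}
    {Ψ : Matrix q q ℝ} (hΨ : Ψᵀ * Ψ = 1) (hU : U = Φ * S * Ψᵀ) :
    U * Uᵀ = Φ * (S * Sᵀ) * Φᵀ := by
  simp only [hU, transpose_mul, transpose_transpose, Matrix.mul_assoc,
    ← Matrix.mul_assoc Ψᵀ Ψ, hΨ, Matrix.one_mul]

theorem transpose_mul_self_eq_one_of_orthogonal {n k : Type*} [Fintype n] [DecidableEq n]
    [Fintype k] [DecidableEq k] {Φ : Matrix n n ℝ} {V : Matrix n k ℝ} (hΦ : Φᵀ * Φ = 1)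
    (hV : Vᵀ * V = 1) : (Φᵀ * V)ᵀ * (Φᵀ * V) = 1 := by
  rw [transpose_mul, transpose_transpose, Matrix.mul_assoc, ← Matrix.mul_assoc Φ,
    mul_eq_one_comm.mp hΦ, Matrix.one_mul, hV]

theorem pod_basis_minimizes_projection_error_general
    (N m r : ℕ)
    (U : Matrix (Fin N) (Fin m) ℝ)
    (Φ : Matrix (Fin N) (Fin N) ℝ)
    (Ψ : Matrix (Fin m) (Fin m) ℝ)
    (S : Matrix (Fin N) (Fin m) ℝ)
    (σ : ℕ → ℝ)
    (hΦ : Φᵀ * Φ = 1) (hΨ : Ψᵀ * Ψ = 1)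
    (hSVD : U = Φ * S * Ψᵀ)
    (hS : ∀ (i : Fin N) (j : Fin m), S i j = if (i : ℕ) = (j : ℕ) then σ (i : ℕ) else 0)
    (hmono : ∀ i j : ℕ, i ≤ j → j < min N m → σ j ≤ σ i)
    (hnonneg : ∀ i : ℕ, i < min N m → 0 ≤ σ i) :
    ∀ V : Matrix (Fin N) (Fin r) ℝ, Vᵀ * V = 1 →
      ∑ i ∈ Finset.Ico r (min N m), σ i ^ 2 ≤ ∑ i, ∑ j, (U - V * Vᵀ * U) i j ^ 2 := by
  intro V hV
  rcases lt_or_ge r (min N m) with hrm | hrm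
  swap
  · rw [Ico_eq_empty_of_le hrm, sum_empty]
    positivity
  set b : Fin N → ℝ := fun i => if (i : ℕ) < m then σ i ^ 2 else 0
  have hUU : U * Uᵀ = Φ * diagonal b * Φᵀ := by
    rw [mul_transpose_self_of_eq_mul_mul_transpose hΨ hSVD,
      mul_transpose_self_eq_diagonal_sq S σ hS]
  have hkey := trace_mul_transpose_mul_diagonal_le_of_antitone
    (transpose_mul_self_eq_one_of_orthogonal hΦ hV) (antitone_ite_lt_sq hmono hnonneg)
    (fun i => by positivity) (hrm.trans_le (min_le_left N m))
  have htr_U : trace (U * Uᵀ) = trace (diagonal b) := by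
    rw [hUU, trace_mul_cycle, hΦ, Matrix.one_mul]
  have htr_VU : trace (V * Vᵀ * (U * Uᵀ)) = trace (Φᵀ * V * (Φᵀ * V)ᵀ * diagonal b) := by
    rw [hUU, transpose_mul, transpose_transpose]
    simp only [← Matrix.mul_assoc]
    rw [trace_mul_comm]
    simp only [← Matrix.mul_assoc]
  calc ∑ t ∈ Ico r (min N m), σ t ^ 2
      = ∑ i ∈ ({i : Fin N | (i : ℕ) < r} : Finset (Fin N))ᶜ, b i :=
        sum_Ico_eq_sum_compl_filter_lt _
    _ = trace (diagonal b) - ∑ i ∈ {i : Fin N | (i : ℕ) < r}, b i := by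
        rw [trace_diagonal, ← sum_add_sum_compl {i : Fin N | (i : ℕ) < r}]
        ring
    _ ≤ trace (U * Uᵀ) - trace (V * Vᵀ * (U * Uᵀ)) := by rw [htr_U, htr_VU]; linarith
    _ = ∑ i, ∑ j, (U - V * Vᵀ * U) i j ^ 2 := (sum_sq_sub_mul_transpose_mul U hV).symm

/-- **Optimality of the POD basis (Schmidt–Eckart–Young).**
If `U = Φ * S * Ψᵀ` is an SVD of `U ∈ ℝ^{N×m}` with singular values
`σ 0 ≥ σ 1 ≥ ... ≥ 0` and `r ≤ min N m`, then for every `V ∈ ℝ^{N×r}` with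
orthonormal columns (`Vᵀ V = 1`),
`‖U − V Vᵀ U‖_F² ≥ ∑_{i = r}^{min N m - 1} (σ i)²` (0-based indexing);
i.e. the first `r` columns of `Φ` minimize the squared Frobenius projection error. -/
theorem pod_basis_minimizes_projection_error
    (N m r : ℕ) (hN : 0 < N) (hm : 0 < m) (hr : r ≤ min N m)
    (U : Matrix (Fin N) (Fin m) ℝ)
    (Φ : Matrix (Fin N) (Fin N) ℝ)
    (Ψ : Matrix (Fin m) (Fin m) ℝ)
    (S : Matrix (Fin N) (Fin m) ℝ)
    (σ : ℕ → ℝ)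
    (hΦ : Φᵀ * Φ = 1) (hΨ : Ψᵀ * Ψ = 1)
    (hSVD : U = Φ * S * Ψᵀ)
    (hS : ∀ (i : Fin N) (j : Fin m), S i j = if (i : ℕ) = (j : ℕ) then σ (i : ℕ) else 0)
    (hmono : ∀ i j : ℕ, i ≤ j → j < min N m → σ j ≤ σ i)
    (hnonneg : ∀ i : ℕ, i < min N m → 0 ≤ σ i) :
    ∀ V : Matrix (Fin N) (Fin r) ℝ, Vᵀ * V = 1 →
      ∑ i ∈ Finset.Ico r (min N m), σ i ^ 2 ≤ ∑ i, ∑ j, (U - V * Vᵀ * U) i j ^ 2 :=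
  pod_basis_minimizes_projection_error_general N m r U Φ Ψ S σ hΦ hΨ hSVD hS hmono hnonneg
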